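/- arXiv:1111.1680 — 2 statements merged into one kernel-verified Lean document; each statement's English description precedes it below -/
import Mathlib

section
/- For 0 < α < 2, the function X_α integrates to 1 over the real line, i.e., ∫_{−∞}^{∞} X_α(y) dy = 1, so X_α is a probability density on ℝ. -/
/-!
Substituting `u = |y| ^ α` and writing `θ = απ/2`, the denominator becomes
`(u + cos θ) ^ 2 + sin θ ^ 2`, so half of the integral is
`(sin θ / (απ)) ∫₀^∞ du / ((u + cos θ) ^ 2 + sin θ ^ 2)`. An arctangent antiderivative
evaluates the last integral to `(π/2 - arctan (cot θ)) / sin θ = θ / sin θ`.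
-/

open Real MeasureTheory Set Filter

lemma integral_Ioi_inv_add_sq_add_sq (c : ℝ) {s : ℝ} (hs : 0 < s) :
    ∫ u in Ioi (0 : ℝ), ((u + c) ^ 2 + s ^ 2)⁻¹ = (π / 2 - arctan (c / s)) / s := by
  have hderiv : ∀ x ∈ Ici (0 : ℝ),
      HasDerivAt (fun u => s⁻¹ * arctan ((u + c) / s)) ((x + c) ^ 2 + s ^ 2)⁻¹ x := by
    intro x _
    have hlin : HasDerivAt (fun u : ℝ => (u + c) / s) (1 / s) x := by
      simpa using ((hasDerivAt_id x).add_const c).div_const s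
    refine (((hasDerivAt_arctan _).comp x hlin).const_mul s⁻¹).congr_deriv ?_
    field_simp
    ring
  have hlim : Tendsto (fun u : ℝ => s⁻¹ * arctan ((u + c) / s)) atTop (nhds (s⁻¹ * (π / 2))) := by
    have hlin : Tendsto (fun u : ℝ => (u + c) / s) atTop atTop :=
      (tendsto_atTop_add_const_right _ c tendsto_id).atTop_div_const hs
    exact ((tendsto_arctan_atTop.mono_right nhdsWithin_le_nhds).comp hlin).const_mul s⁻¹
  rw [integral_Ioi_of_hasDerivAt_of_nonneg' hderiv (fun x _ => by positivity) hlim, zero_add]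
  field_simp

lemma integral_Ioi_inv_add_cos_sq_add_sin_sq {θ : ℝ} (h0 : 0 < θ) (hπ : θ < π) :
    ∫ u in Ioi (0 : ℝ), ((u + cos θ) ^ 2 + sin θ ^ 2)⁻¹ = θ / sin θ := by
  have hcot : cos θ / sin θ = tan (π / 2 - θ) := by
    rw [tan_eq_sin_div_cos, sin_pi_div_two_sub, cos_pi_div_two_sub]
  rw [integral_Ioi_inv_add_sq_add_sq _ (sin_pos_of_pos_of_lt_pi h0 hπ), hcot,
    arctan_tan (by linarith) (by linarith)]
  ring

lemma one_add_two_rpow_mul_cos_add_rpow {x : ℝ} (hx : 0 ≤ x) (α θ : ℝ) :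
    1 + 2 * x ^ α * cos θ + x ^ (2 * α) = (x ^ α + cos θ) ^ 2 + sin θ ^ 2 := by
  rw [mul_comm 2 α, rpow_mul hx, rpow_two]
  nlinarith [cos_sq_add_sin_sq θ]

lemma integral_Ioi_rpow_sub_one_div_one_add_two_rpow_mul_cos_add_rpow {α θ : ℝ}
    (hα : 0 < α) (h0 : 0 < θ) (hπ : θ < π) :
    ∫ x in Ioi (0 : ℝ), x ^ (α - 1) / (1 + 2 * x ^ α * cos θ + x ^ (2 * α)) =
      θ / (α * sin θ) := by
  have hsubst : ∫ x in Ioi (0 : ℝ), x ^ (α - 1) / (1 + 2 * x ^ α * cos θ + x ^ (2 * α)) =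
      α⁻¹ * ∫ x in Ioi (0 : ℝ), (α * x ^ (α - 1)) • ((x ^ α + cos θ) ^ 2 + sin θ ^ 2)⁻¹ := by
    rw [← integral_const_mul]
    refine setIntegral_congr_fun measurableSet_Ioi fun x hx => ?_
    rw [one_add_two_rpow_mul_cos_add_rpow (le_of_lt hx), smul_eq_mul]
    field_simp
  rw [hsubst, integral_comp_rpow_Ioi_of_pos (g := fun u => ((u + cos θ) ^ 2 + sin θ ^ 2)⁻¹) hα,
    integral_Ioi_inv_add_cos_sq_add_sin_sq h0 hπ]
  field_simp

theorem X_alpha_integral_one (α : ℝ) (hα0 : 0 < α) (hα2 : α < 2) :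
    ∫ y : ℝ, (1 / π) * |y| ^ (α - 1) * Real.sin (α * π / 2) /
      (1 + 2 * |y| ^ α * Real.cos (α * π / 2) + |y| ^ (2 * α)) = 1 := by
  set θ := α * π / 2 with hθ
  have hθ0 : 0 < θ := by positivity
  have hθπ : θ < π := by nlinarith [pi_pos]
  have hsin : 0 < sin θ := sin_pos_of_pos_of_lt_pi hθ0 hθπ
  have hsymm : ∫ y : ℝ, |y| ^ (α - 1) / (1 + 2 * |y| ^ α * cos θ + |y| ^ (2 * α)) =
      2 * (θ / (α * sin θ)) := by
    rw [integral_comp_abs (f := fun x => x ^ (α - 1) / (1 + 2 * x ^ α * cos θ + x ^ (2 * α))),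
      integral_Ioi_rpow_sub_one_div_one_add_two_rpow_mul_cos_add_rpow hα0 hθ0 hθπ]
  calc _ = sin θ / π * ∫ y : ℝ, |y| ^ (α - 1) / (1 + 2 * |y| ^ α * cos θ + |y| ^ (2 * α)) := by
        rw [← integral_const_mul]
        congr 1 with y
        ring
    _ = 1 := by
      rw [hsymm]
      field_simp
      linarith
end

section
/- If f : ℝ → ℝ is an even C¹ probability density that is unimodal with mode at 0 (i.e., f′(r) ≤ 0 for r > 0) and f(r), r f(r) → 0 at infinity, then F(x) := −f′(|x|)/(2π|x|) is a probability density on ℝ³: it is nonnegative and integrates to 1. -/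
/-!
In polar coordinates `∫_{ℝ³} F = 4π ∫₀^∞ r² F(r) dr = 2 ∫₀^∞ -r f'(r) dr`. The function
`∫₀^r f - r f(r)` is an antiderivative of `-r f'(r)`, so this equals `2 ∫₀^∞ f = ∫_ℝ f = 1`
once the boundary term `r f(r)` is shown to vanish at `0⁺` and at `∞`. Both limits follow from
monotonicity: `0 ≤ r f(r) ≤ 2 ∫_{r/2}^r f`, and the right side tends to `0` at either end
because `f` is integrable.
-/

open Real MeasureTheory Filter Set Topology

theorem MeasureTheory.IntegrableOn.intervalIntegrable_of_Ioi {E : Type*} [NormedAddCommGroup E]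
    {f : ℝ → E} {μ : Measure ℝ} {a b c : ℝ} (hf : IntegrableOn f (Ioi a) μ) (hb : a ≤ b)
    (hc : a ≤ c) : IntervalIntegrable f μ b c :=
  intervalIntegrable_iff.2 <| hf.mono_set fun _ ht ↦ (le_min hb hc).trans_lt ht.1

theorem AntitoneOn.nonneg_of_integrableOn_Ioi {f : ℝ → ℝ} {a : ℝ} (hf : AntitoneOn f (Ioi a))
    (hint : IntegrableOn f (Ioi a)) {x : ℝ} (hx : a < x) : 0 ≤ f x := by
  by_contra! hneg
  have hconst : IntegrableOn (fun _ ↦ f x) (Ioi x) := by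
    refine Integrable.mono (hint.mono_set (Ioi_subset_Ioi hx.le)) (by fun_prop) ?_
    filter_upwards [self_mem_ae_restrict measurableSet_Ioi] with y hy
    have hfy : f y ≤ f x := hf hx (hx.trans hy) (le_of_lt hy)
    rw [Real.norm_of_nonpos hneg.le, Real.norm_of_nonpos (by linarith)]
    linarith
  simp [hneg.ne] at hconst

theorem AntitoneOn.mul_le_two_mul_intervalIntegral_half {f : ℝ → ℝ} (hf : AntitoneOn f (Ioi 0))
    (hint : IntegrableOn f (Ioi 0)) {r : ℝ} (hr : 0 < r) :
    r * f r ≤ 2 * ∫ t in r / 2..r, f t := by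
  have hle : r / 2 ≤ r := by linarith
  have hmono : ∫ _ in r / 2..r, f r ≤ ∫ t in r / 2..r, f t :=
    intervalIntegral.integral_mono_on hle intervalIntegrable_const
      (hint.intervalIntegrable_of_Ioi (by positivity) hr.le)
      fun t ht ↦ hf (show (0 : ℝ) < t by linarith [ht.1]) hr ht.2
  rw [intervalIntegral.integral_const, smul_eq_mul] at hmono
  linarith

theorem AntitoneOn.tendsto_mul_self_zero {f : ℝ → ℝ} {l : Filter ℝ} {L : ℝ}
    (hf : AntitoneOn f (Ioi 0)) (hint : IntegrableOn f (Ioi 0)) (hl : ∀ᶠ r in l, 0 < r)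
    (hhalf : Tendsto (· / 2) l l) (hG : Tendsto (fun r ↦ ∫ t in 0..r, f t) l (𝓝 L)) :
    Tendsto (fun r ↦ r * f r) l (𝓝 0) := by
  have hslice : Tendsto (fun r ↦ 2 * ∫ t in r / 2..r, f t) l (𝓝 0) := by
    have hsub := (hG.sub (hG.comp hhalf)).const_mul 2
    rw [sub_self, mul_zero] at hsub
    refine hsub.congr' ?_
    filter_upwards [hl] with r hr
    rw [Function.comp_apply, intervalIntegral.integral_interval_sub_left
      (hint.intervalIntegrable_of_Ioi le_rfl hr.le)
      (hint.intervalIntegrable_of_Ioi le_rfl (by positivity))]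
  refine tendsto_of_tendsto_of_tendsto_of_le_of_le' tendsto_const_nhds hslice ?_ ?_
  · filter_upwards [hl] with r hr
    exact mul_nonneg hr.le (hf.nonneg_of_integrableOn_Ioi hint hr)
  · filter_upwards [hl] with r hr
    exact hf.mul_le_two_mul_intervalIntegral_half hint hr

theorem integral_Ioi_neg_mul_deriv_eq_integral_Ioi {f : ℝ → ℝ}
    (hdiff : DifferentiableOn ℝ f (Ioi 0)) (hderiv : ∀ x, 0 < x → deriv f x ≤ 0)
    (hint : IntegrableOn f (Ioi 0)) :
    ∫ x in Ioi 0, -(x * deriv f x) = ∫ x in Ioi 0, f x := by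
  set G : ℝ → ℝ := fun r ↦ ∫ t in 0..r, f t
  have hanti : AntitoneOn f (Ioi 0) := antitoneOn_of_deriv_nonpos (convex_Ioi 0)
    hdiff.continuousOn (by rwa [interior_Ioi]) (by rwa [interior_Ioi])
  have hG0 : Tendsto G (𝓝[>] 0) (𝓝 0) := by
    have hcont : ContinuousWithinAt G (Icc 0 1) 0 := intervalIntegral.continuousWithinAt_primitive
      (measure_singleton 0) (hint.intervalIntegrable_of_Ioi (by simp) (by simp))
    simpa [G] using ((hcont.mono_of_mem_nhdsWithin (Icc_mem_nhdsGE zero_lt_one)).mono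
      Ioi_subset_Ici_self).tendsto
  have hGtop : Tendsto G atTop (𝓝 (∫ x in Ioi 0, f x)) :=
    intervalIntegral_tendsto_integral_Ioi 0 hint tendsto_id
  have hhalf0 : Tendsto (· / 2) (𝓝[>] (0 : ℝ)) (𝓝[>] 0) :=
    tendsto_nhdsWithin_of_tendsto_nhds_of_eventually_within _
      (by simpa using ((tendsto_id (x := 𝓝 (0 : ℝ))).div_const 2).mono_left nhdsWithin_le_nhds)
      (eventually_mem_nhdsWithin.mono fun r (hr : 0 < r) ↦ half_pos hr)
  have hlim0 : ContinuousWithinAt (fun r ↦ G r - r * f r) (Ici 0) 0 := by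
    rw [← continuousWithinAt_Ioi_iff_Ici]
    simpa [ContinuousWithinAt, G] using
      hG0.sub (hanti.tendsto_mul_self_zero hint self_mem_nhdsWithin hhalf0 hG0)
  have hlimtop : Tendsto (fun r ↦ G r - r * f r) atTop (𝓝 (∫ x in Ioi 0, f x)) := by
    simpa using hGtop.sub (hanti.tendsto_mul_self_zero hint (eventually_gt_atTop 0)
      (tendsto_id.atTop_div_const two_pos) hGtop)
  have hderivG : ∀ x ∈ Ioi (0 : ℝ), HasDerivAt (fun r ↦ G r - r * f r) (-(x * deriv f x)) x := by
    intro x hx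
    have hfx : HasDerivAt f (deriv f x) x :=
      (hdiff.differentiableAt (Ioi_mem_nhds hx)).hasDerivAt
    have hGx : HasDerivAt G (f x) x :=
      intervalIntegral.integral_hasDerivAt_right
        (hint.intervalIntegrable_of_Ioi le_rfl (le_of_lt hx))
        (hdiff.continuousOn.stronglyMeasurableAtFilter isOpen_Ioi x hx)
        hfx.continuousAt
    exact (hGx.sub ((hasDerivAt_id' x).mul hfx)).congr_deriv (by ring)
  rw [integral_Ioi_of_hasDerivAt_of_nonneg hlim0 hderivG
    (fun x hx ↦ neg_nonneg.2 (mul_nonpos_of_nonneg_of_nonpos (le_of_lt hx) (hderiv x hx))) hlimtop]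
  simp [G]

theorem integral_fun_norm_euclideanSpace_fin_three {F : Type*} [NormedAddCommGroup F]
    [NormedSpace ℝ F] (h : ℝ → F) :
    ∫ x : EuclideanSpace ℝ (Fin 3), h ‖x‖ = (4 * π) • ∫ r in Ioi 0, r ^ 2 • h r := by
  rw [integral_fun_norm_addHaar, finrank_euclideanSpace_fin, measureReal_def,
    EuclideanSpace.volume_ball_fin_three, ← Nat.cast_smul_eq_nsmul ℝ, smul_smul]
  congr 1
  rw [ENNReal.ofReal_one, one_pow, one_mul, ENNReal.toReal_ofReal (by positivity)]
  ring

theorem integral_eq_two_mul_integral_Ioi_of_even {f : ℝ → ℝ} (heven : ∀ r, f (-r) = f r) :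
    ∫ r, f r = 2 * ∫ r in Ioi 0, f r := by
  rw [← integral_comp_abs]
  congr with r
  rcases abs_choice r with h | h <;> simp [h, heven]

theorem radial_density_from_unimodal_general
    (f : ℝ → ℝ)
    (hf_even : ∀ r : ℝ, f (-r) = f r)
    (hf_smooth : ContDiffOn ℝ 1 f (Set.Ioi 0))
    (hf_mono : ∀ r : ℝ, 0 < r → deriv f r ≤ 0)
    (hf_prob : ∫ r : ℝ, f r = 1)
    (F : EuclideanSpace ℝ (Fin 3) → ℝ)
    (hF : ∀ x : EuclideanSpace ℝ (Fin 3), x ≠ 0 →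
      F x = -deriv f ‖x‖ / (2 * π * ‖x‖)) :
    (∀ x : EuclideanSpace ℝ (Fin 3), x ≠ 0 → 0 ≤ F x) ∧
    ∫ x : EuclideanSpace ℝ (Fin 3), F x = 1 := by
  have hint : Integrable f := .of_integral_ne_zero (by simp [hf_prob])
  refine ⟨fun x hx ↦ ?_, ?_⟩
  · rw [hF x hx]
    exact div_nonneg (neg_nonneg.2 (hf_mono _ (norm_pos_iff.2 hx))) (by positivity)
  have hradial : F =ᵐ[volume] fun x ↦ -deriv f ‖x‖ / (2 * π * ‖x‖) := by
    filter_upwards [Measure.ae_ne volume 0] with x hx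
    exact hF x hx
  calc ∫ x, F x
      = (4 * π) * ∫ r in Ioi 0, r ^ 2 * (-deriv f r / (2 * π * r)) := by
        rw [integral_congr_ae hradial,
          integral_fun_norm_euclideanSpace_fin_three fun r ↦ -deriv f r / (2 * π * r)]
        rfl
    _ = 2 * ∫ r in Ioi 0, -(r * deriv f r) := by
        rw [← integral_const_mul, ← integral_const_mul]
        refine setIntegral_congr_fun measurableSet_Ioi fun r (hr : 0 < r) ↦ ?_
        field_simp
        ring
    _ = 1 := by
        rw [integral_Ioi_neg_mul_deriv_eq_integral_Ioi (hf_smooth.differentiableOn one_ne_zero)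
          hf_mono hint.integrableOn, ← integral_eq_two_mul_integral_Ioi_of_even hf_even, hf_prob]

theorem radial_density_from_unimodal
    (f : ℝ → ℝ)
    (hf_even : ∀ r : ℝ, f (-r) = f r)
    (hf_smooth : ContDiffOn ℝ 1 f (Set.Ioi 0))
    (hf_mono : ∀ r : ℝ, 0 < r → deriv f r ≤ 0)
    (hf_decay : Tendsto f atTop (nhds 0))
    (hf_decay' : Tendsto (fun r => r * f r) atTop (nhds 0))
    (hf_prob : ∫ r : ℝ, f r = 1)
    (F : EuclideanSpace ℝ (Fin 3) → ℝ)
    (hF : ∀ x : EuclideanSpace ℝ (Fin 3), x ≠ 0 →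
      F x = -deriv f ‖x‖ / (2 * π * ‖x‖)) :
    (∀ x : EuclideanSpace ℝ (Fin 3), x ≠ 0 → 0 ≤ F x) ∧
    ∫ x : EuclideanSpace ℝ (Fin 3), F x = 1 :=
  radial_density_from_unimodal_general f hf_even hf_smooth hf_mono hf_prob F hF
end
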